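/- arXiv:2112.00049 — 6 statements merged into one kernel-verified Lean document; each statement's English description precedes it below -/
import Mathlib

section
/- Let K ∈ L¹(ℝ) be even and real-valued, let f : ℝ → ℝ be continuously differentiable with F' = f for some F, and let u : ℝ × I → ℝ (I an open interval) be continuously differentiable, 2π-periodic in x, and satisfy u_t(x,t) + ∂_x[f(u(x,t))] + (K∗u_x(·,t))(x) = 0 for all x and t ∈ I, where (K∗w)(x) = ∫_ℝ K(ξ)w(x−ξ)dξ. Then the Hamiltonian H(t) = ∫₀^{2π} [F(u(x,t)) + ½u(x,t)·(K∗u(·,t))(x)]dx is constant in t. -/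
open MeasureTheory Real

/-!
Differentiating under the integral sign, `H'(t) = ∫₀^{2π} (f(u) + K∗u) u_t dx`: the quadratic term
contributes `½(⟨u_t, K∗u⟩ + ⟨u, K∗u_t⟩) = ⟨u_t, K∗u⟩`, because convolution with an even kernel
is symmetric on periodic functions (Fubini, a shift over one period, and `ξ ↦ -ξ`). The equation
reads `u_t = -∂ₓG` with `G = f(u) + K∗u`, so `H' = -∫₀^{2π} G ∂ₓG dx = -[G²/2]₀^{2π} = 0` by
periodicity of `G`.
-/

open Set Filter Function Topology

section Periodic

variable {T : ℝ}

theorem Function.Periodic.exists_abs_le {v : ℝ → ℝ} (hper : Periodic v T) (hT : T ≠ 0)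
    (hv : Continuous v) : ∃ C, ∀ x, |v x| ≤ C := by
  obtain ⟨C, hC⟩ := isBounded_iff_forall_norm_le.1 (hper.isBounded_of_continuous hT hv)
  exact ⟨C, fun x => hC _ (mem_range_self x)⟩

theorem exists_abs_le_of_periodic_left {g : ℝ → ℝ → ℝ} (hg : Continuous (uncurry g)) (hT : 0 < T)
    (hper : ∀ t, Periodic (g · t) T) {s : Set ℝ} (hs : IsCompact s) :
    ∃ C, ∀ x, ∀ t ∈ s, |g x t| ≤ C := by
  obtain ⟨C, hC⟩ := (isCompact_Icc.prod hs).exists_bound_of_continuousOn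
    (s := Icc 0 T ×ˢ s) hg.continuousOn
  refine ⟨C, fun x t ht => ?_⟩
  obtain ⟨y, hy, hxy⟩ := (hper t).exists_mem_Ico₀ hT x
  rw [hxy]
  exact hC (y, t) ⟨Ico_subset_Icc_self hy, ht⟩

theorem Function.Periodic.deriv {v : ℝ → ℝ} (hper : Periodic v T) : Periodic (deriv v) T := by
  intro x
  rw [← deriv_comp_add_const, hper.funext]

theorem Function.Periodic.intervalIntegral_comp_sub_right {h : ℝ → ℝ} (hper : Periodic h T)
    (ξ : ℝ) : ∫ x in 0..T, h (x - ξ) = ∫ x in 0..T, h x := by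
  rw [intervalIntegral.integral_comp_sub_right, show T - ξ = 0 - ξ + T by ring,
    hper.intervalIntegral_add_eq, zero_add]

theorem Function.Periodic.intervalIntegral_mul_deriv_eq_zero {G G' : ℝ → ℝ} (hper : Periodic G T)
    (hG : ∀ x, HasDerivAt G (G' x) x) (hG' : Continuous G') :
    ∫ x in 0..T, G x * G' x = 0 := by
  have hGc : Continuous G := continuous_iff_continuousAt.2 fun x => (hG x).continuousAt
  have hsq : ∀ x ∈ uIcc 0 T, HasDerivAt (fun y => G y * G y / 2) (G x * G' x) x := fun x _ =>
    (((hG x).mul (hG x)).div_const 2).congr_deriv (by ring)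
  rw [intervalIntegral.integral_eq_sub_of_hasDerivAt hsq ((hGc.mul hG').intervalIntegrable _ _),
    ← zero_add T, hper 0, sub_self]

end Periodic

section PartialDeriv

variable {u : ℝ → ℝ → ℝ} {T : ℝ}

noncomputable def partialX (u : ℝ → ℝ → ℝ) (x t : ℝ) : ℝ := deriv (fun y => u y t) x

noncomputable def partialT (u : ℝ → ℝ → ℝ) (x t : ℝ) : ℝ := deriv (fun s => u x s) t

theorem hasDerivAt_uncurry_left (hu : Differentiable ℝ (uncurry u)) (x t : ℝ) :
    HasDerivAt (fun y => u y t) (fderiv ℝ (uncurry u) (x, t) (1, 0)) x := by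
  have h := (hu (x, t)).hasFDerivAt.comp_hasDerivAt x
    ((hasDerivAt_id x).prodMk (hasDerivAt_const x t))
  exact h

theorem hasDerivAt_uncurry_right (hu : Differentiable ℝ (uncurry u)) (x t : ℝ) :
    HasDerivAt (fun s => u x s) (fderiv ℝ (uncurry u) (x, t) (0, 1)) t := by
  have h := (hu (x, t)).hasFDerivAt.comp_hasDerivAt t
    ((hasDerivAt_const t x).prodMk (hasDerivAt_id t))
  exact h

theorem hasDerivAt_partialX (hu : Differentiable ℝ (uncurry u)) (x t : ℝ) :
    HasDerivAt (fun y => u y t) (partialX u x t) x :=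
  (hasDerivAt_uncurry_left hu x t).differentiableAt.hasDerivAt

theorem hasDerivAt_partialT (hu : Differentiable ℝ (uncurry u)) (x t : ℝ) :
    HasDerivAt (fun s => u x s) (partialT u x t) t :=
  (hasDerivAt_uncurry_right hu x t).differentiableAt.hasDerivAt

theorem continuous_partialX (hu : ContDiff ℝ 1 (uncurry u)) :
    Continuous (uncurry (partialX u)) := by
  have h : uncurry (partialX u) = fun p => fderiv ℝ (uncurry u) p (1, 0) := funext fun p =>
    (hasDerivAt_uncurry_left (hu.differentiable one_ne_zero) p.1 p.2).deriv
  rw [h]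
  exact (hu.continuous_fderiv one_ne_zero).clm_apply continuous_const

theorem continuous_partialT (hu : ContDiff ℝ 1 (uncurry u)) :
    Continuous (uncurry (partialT u)) := by
  have h : uncurry (partialT u) = fun p => fderiv ℝ (uncurry u) p (0, 1) := funext fun p =>
    (hasDerivAt_uncurry_right (hu.differentiable one_ne_zero) p.1 p.2).deriv
  rw [h]
  exact (hu.continuous_fderiv one_ne_zero).clm_apply continuous_const

theorem periodic_partialX (hper : ∀ t, Periodic (u · t) T) (t : ℝ) :
    Periodic (partialX u · t) T :=
  (hper t).deriv

theorem periodic_partialT (hper : ∀ t, Periodic (u · t) T) (t : ℝ) :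
    Periodic (partialT u · t) T := fun x => by
  simp only [partialT, fun s => hper s x]

end PartialDeriv

section KernelConv

variable {K : ℝ → ℝ} {T : ℝ}

noncomputable def kernelConv (K w : ℝ → ℝ) (x : ℝ) : ℝ := ∫ ξ, K ξ * w (x - ξ)

theorem Function.Periodic.kernelConv {w : ℝ → ℝ} (hper : Periodic w T) :
    Periodic (kernelConv K w) T := fun x => by
  simp only [_root_.kernelConv, add_sub_right_comm x T, hper _]

theorem continuous_kernelConv_of_periodic (hK : Integrable K) {g : ℝ → ℝ → ℝ}
    (hg : Continuous (uncurry g)) (hT : 0 < T) (hper : ∀ t, Periodic (g · t) T) :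
    Continuous (uncurry fun x t => kernelConv K (g · t) x) := by
  refine continuous_iff_continuousAt.2 fun p₀ => ?_
  obtain ⟨C, hC⟩ := exists_abs_le_of_periodic_left hg hT hper (isCompact_closedBall p₀.2 1)
  have hshift : ∀ ξ, Continuous fun p : ℝ × ℝ => g (p.1 - ξ) p.2 := fun ξ =>
    hg.comp ((continuous_fst.sub continuous_const).prodMk continuous_snd)
  refine continuousAt_of_dominated (bound := fun ξ => ‖K ξ‖ * C) ?_ ?_ (hK.norm.mul_const C) ?_
  · exact Eventually.of_forall fun p => hK.aestronglyMeasurable.mul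
      (hg.comp ((continuous_const.sub continuous_id).prodMk continuous_const)).aestronglyMeasurable
  · filter_upwards [continuous_snd.continuousAt.preimage_mem_nhds
      (Metric.closedBall_mem_nhds p₀.2 one_pos)] with p hp
    refine Eventually.of_forall fun ξ => ?_
    rw [norm_mul]
    exact mul_le_mul_of_nonneg_left (hC _ _ hp) (norm_nonneg _)
  · exact Eventually.of_forall fun ξ => (continuous_const.mul (hshift ξ)).continuousAt

theorem hasDerivAt_integral_kernel_mul (hK : Integrable K) {g g' : ℝ → ℝ → ℝ} {s₀ C₀ C : ℝ}
    (hg : ∀ s, Continuous (g · s)) (hg' : Continuous (g' · s₀))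
    (hderiv : ∀ ξ s, HasDerivAt (g ξ) (g' ξ s) s)
    (hg_le : ∀ ξ, |g ξ s₀| ≤ C₀) (hg'_le : ∀ ξ, ∀ s ∈ Metric.ball s₀ 1, |g' ξ s| ≤ C) :
    HasDerivAt (fun s => ∫ ξ, K ξ * g ξ s) (∫ ξ, K ξ * g' ξ s₀) s₀ := by
  refine (hasDerivAt_integral_of_dominated_loc_of_deriv_le (F := fun s ξ => K ξ * g ξ s)
    (F' := fun s ξ => K ξ * g' ξ s) (bound := fun ξ => ‖K ξ‖ * C)
    (Metric.ball_mem_nhds s₀ one_pos) ?_ ?_ ?_ ?_ (hK.norm.mul_const C) ?_).2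
  · exact Eventually.of_forall fun s => hK.aestronglyMeasurable.mul (hg s).aestronglyMeasurable
  · exact hK.mul_bdd (hg s₀).aestronglyMeasurable (Eventually.of_forall hg_le)
  · exact hK.aestronglyMeasurable.mul hg'.aestronglyMeasurable
  · refine Eventually.of_forall fun ξ s hs => ?_
    rw [norm_mul]
    exact mul_le_mul_of_nonneg_left (hg'_le ξ s hs) (norm_nonneg _)
  · exact Eventually.of_forall fun ξ s _ => (hderiv ξ s).const_mul (K ξ)

theorem hasDerivAt_kernelConv (hK : Integrable K) {w w' : ℝ → ℝ} {C₀ C : ℝ} (hw : Continuous w)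
    (hw' : Continuous w') (hderiv : ∀ y, HasDerivAt w (w' y) y) (hw_le : ∀ y, |w y| ≤ C₀)
    (hw'_le : ∀ y, |w' y| ≤ C) (x : ℝ) :
    HasDerivAt (kernelConv K w) (kernelConv K w' x) x :=
  hasDerivAt_integral_kernel_mul (g := fun ξ s => w (s - ξ)) (g' := fun ξ s => w' (s - ξ)) hK
    (fun _ => hw.comp (continuous_const.sub continuous_id))
    (hw'.comp (continuous_const.sub continuous_id))
    (fun ξ s => (hderiv (s - ξ)).comp_sub_const s ξ) (fun _ => hw_le _) (fun _ _ _ => hw'_le _)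

theorem hasDerivAt_kernelConv_partialT (hK : Integrable K) {u : ℝ → ℝ → ℝ}
    (hu : ContDiff ℝ 1 (uncurry u)) (hT : 0 < T) (hper : ∀ t, Periodic (u · t) T) (x t₀ : ℝ) :
    HasDerivAt (fun t => kernelConv K (u · t) x) (kernelConv K (partialT u · t₀) x) t₀ := by
  obtain ⟨C₀, hC₀⟩ := exists_abs_le_of_periodic_left hu.continuous hT hper isCompact_singleton
  obtain ⟨C, hC⟩ := exists_abs_le_of_periodic_left (continuous_partialT hu) hT
    (periodic_partialT hper) (isCompact_closedBall t₀ 1)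
  have hshift : ∀ {g : ℝ → ℝ → ℝ}, Continuous (uncurry g) →
      ∀ s, Continuous fun ξ => g (x - ξ) s :=
    fun hg _ => hg.comp ((continuous_const.sub continuous_id).prodMk continuous_const)
  exact hasDerivAt_integral_kernel_mul (g := fun ξ s => u (x - ξ) s)
    (g' := fun ξ s => partialT u (x - ξ) s) hK (hshift hu.continuous)
    (hshift (continuous_partialT hu) t₀)
    (fun ξ s => hasDerivAt_partialT (hu.differentiable one_ne_zero) (x - ξ) s)
    (fun _ => hC₀ _ t₀ rfl) (fun _ s hs => hC _ s (Metric.ball_subset_closedBall hs))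

theorem intervalIntegral_mul_kernelConv (hK : Integrable K) {v w : ℝ → ℝ} (hv : Continuous v)
    (hw : Continuous w) (hT : 0 < T) (hvper : Periodic v T) (hwper : Periodic w T) :
    ∫ x in 0..T, v x * kernelConv K w x = ∫ ξ, K ξ * ∫ x in 0..T, v x * w (x - ξ) := by
  obtain ⟨Cv, hCv⟩ := hvper.exists_abs_le hT.ne' hv
  obtain ⟨Cw, hCw⟩ := hwper.exists_abs_le hT.ne' hw
  have : IsFiniteMeasure (volume.restrict (Ioc 0 T)) :=
    isFiniteMeasure_restrict.2 measure_Ioc_lt_top.ne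
  have hbdd : ∀ p : ℝ × ℝ, ‖v p.1 * w (p.1 - p.2)‖ ≤ Cv * Cw := fun p => by
    rw [Real.norm_eq_abs, abs_mul]
    exact mul_le_mul (hCv _) (hCw _) (abs_nonneg _) ((abs_nonneg _).trans (hCv 0))
  have hint : Integrable (fun p : ℝ × ℝ => K p.2 * (v p.1 * w (p.1 - p.2)))
      ((volume.restrict (Ioc 0 T)).prod volume) := by
    simpa only [one_mul, Pi.mul_apply, Pi.sub_apply, comp_apply] using
      ((integrable_const (μ := volume.restrict (Ioc 0 T)) (1 : ℝ)).mul_prod hK).mul_bdd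
        ((hv.comp continuous_fst).mul
          (hw.comp (continuous_fst.sub continuous_snd))).aestronglyMeasurable
        (Eventually.of_forall hbdd)
  calc ∫ x in 0..T, v x * kernelConv K w x
      = ∫ x in Ioc 0 T, ∫ ξ, K ξ * (v x * w (x - ξ)) := by
        rw [intervalIntegral.integral_of_le hT.le]
        refine integral_congr_ae (Eventually.of_forall fun x => ?_)
        simp only [kernelConv, ← integral_const_mul]
        congr with ξ
        ring
    _ = ∫ ξ, ∫ x in Ioc 0 T, K ξ * (v x * w (x - ξ)) :=
        integral_integral_swap (f := fun x ξ => K ξ * (v x * w (x - ξ))) hint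
    _ = ∫ ξ, K ξ * ∫ x in 0..T, v x * w (x - ξ) := by
        simp only [integral_const_mul, intervalIntegral.integral_of_le hT.le]

theorem intervalIntegral_mul_kernelConv_comm (hK : Integrable K) (hKeven : ∀ ξ, K (-ξ) = K ξ)
    {v w : ℝ → ℝ} (hv : Continuous v) (hw : Continuous w) (hT : 0 < T) (hvper : Periodic v T)
    (hwper : Periodic w T) :
    ∫ x in 0..T, v x * kernelConv K w x = ∫ x in 0..T, w x * kernelConv K v x := by
  rw [intervalIntegral_mul_kernelConv hK hv hw hT hvper hwper,
    intervalIntegral_mul_kernelConv hK hw hv hT hwper hvper, ← integral_neg_eq_self]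
  refine integral_congr_ae (Eventually.of_forall fun ξ => ?_)
  have hshift := ((hvper.sub_const ξ).mul hwper).intervalIntegral_comp_sub_right (-ξ)
  simp only [Pi.mul_apply, sub_neg_eq_add, add_sub_cancel_right] at hshift
  simp only [hKeven, sub_neg_eq_add, hshift, mul_comm (w _)]

theorem Function.Periodic.continuous_kernelConv (hK : Integrable K) {w : ℝ → ℝ} (hw : Continuous w)
    (hT : 0 < T) (hper : Periodic w T) : Continuous (_root_.kernelConv K w) :=
  (continuous_kernelConv_of_periodic (g := fun x _ => w x) hK (hw.comp continuous_fst) hT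
    fun _ => hper).comp (continuous_id.prodMk (continuous_const (y := 0)))

theorem intervalIntegral_mul_add_half_kernelConv (hK : Integrable K)
    (hKeven : ∀ ξ, K (-ξ) = K ξ) {g v w : ℝ → ℝ} (hg : Continuous g) (hv : Continuous v)
    (hw : Continuous w) (hT : 0 < T) (hvper : Periodic v T) (hwper : Periodic w T) :
    ∫ x in 0..T, (g x * w x + 1 / 2 * (w x * kernelConv K v x + v x * kernelConv K w x))
      = ∫ x in 0..T, (g x + kernelConv K v x) * w x := by
  have hKv := hvper.continuous_kernelConv hK hv hT
  have hKw := hwper.continuous_kernelConv hK hw hT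
  calc ∫ x in 0..T, (g x * w x + 1 / 2 * (w x * kernelConv K v x + v x * kernelConv K w x))
      = ∫ x in 0..T, ((g x + kernelConv K v x) * w x
          + 1 / 2 * (v x * kernelConv K w x - w x * kernelConv K v x)) :=
        intervalIntegral.integral_congr fun x _ => by ring
    _ = ∫ x in 0..T, (g x + kernelConv K v x) * w x := by
        rw [intervalIntegral.integral_add, intervalIntegral.integral_const_mul,
          intervalIntegral.integral_sub, intervalIntegral_mul_kernelConv_comm hK hKeven hv hw hT
            hvper hwper, sub_self, mul_zero, add_zero]
        all_goals exact Continuous.intervalIntegrable (by fun_prop) 0 T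

end KernelConv

theorem hasDerivAt_intervalIntegral_of_continuous_partial {Φ Φ' : ℝ → ℝ → ℝ} {a b t₀ : ℝ}
    (hΦ : ∀ t, Continuous (Φ · t)) (hΦ' : Continuous (uncurry Φ'))
    (hderiv : ∀ x t, HasDerivAt (Φ x) (Φ' x t) t) :
    HasDerivAt (fun t => ∫ x in a..b, Φ x t) (∫ x in a..b, Φ' x t₀) t₀ := by
  obtain ⟨C, hC⟩ := (isCompact_uIcc.prod (isCompact_closedBall t₀ 1)).exists_bound_of_continuousOn
    (s := uIcc a b ×ˢ Metric.closedBall t₀ 1) hΦ'.continuousOn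
  exact (intervalIntegral.hasDerivAt_integral_of_dominated_loc_of_deriv_le
    (F := fun t x => Φ x t) (F' := fun t x => Φ' x t) (bound := fun _ => C)
    (Metric.ball_mem_nhds t₀ one_pos) (Eventually.of_forall fun t => (hΦ t).aestronglyMeasurable)
    ((hΦ t₀).intervalIntegrable a b)
    (hΦ'.comp (continuous_id.prodMk continuous_const)).aestronglyMeasurable
    (Eventually.of_forall fun x hx t ht =>
      hC (x, t) ⟨uIoc_subset_uIcc hx, Metric.ball_subset_closedBall ht⟩)
    intervalIntegrable_const (Eventually.of_forall fun x _ t _ => hderiv x t)).2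

section Hamiltonian

variable {K f F : ℝ → ℝ} {u : ℝ → ℝ → ℝ} {T : ℝ}

noncomputable def hamiltonian (K F : ℝ → ℝ) (u : ℝ → ℝ → ℝ) (T t : ℝ) : ℝ :=
  ∫ x in 0..T, (F (u x t) + (1 / 2) * u x t * kernelConv K (u · t) x)

theorem hasDerivAt_hamiltonian (hK : Integrable K) (hKeven : ∀ ξ, K (-ξ) = K ξ)
    (hf : Continuous f) (hF : ∀ y, HasDerivAt F (f y) y) (hu : ContDiff ℝ 1 (uncurry u))
    (hT : 0 < T) (hper : ∀ t, Periodic (u · t) T) (t₀ : ℝ) :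
    HasDerivAt (hamiltonian K F u T)
      (∫ x in 0..T, (f (u x t₀) + kernelConv K (u · t₀) x) * partialT u x t₀) t₀ := by
  have hu_diff := hu.differentiable one_ne_zero
  have hslice : ∀ {g : ℝ → ℝ → ℝ}, Continuous (uncurry g) → ∀ t, Continuous (g · t) :=
    fun hg t => hg.comp (continuous_id.prodMk continuous_const)
  have hu_cont : Continuous (uncurry u) := hu.continuous
  have hut_cont := continuous_partialT hu
  have hconv : Continuous (uncurry fun x t => kernelConv K (u · t) x) :=
    continuous_kernelConv_of_periodic hK hu.continuous hT hper
  have hconvt : Continuous (uncurry fun x t => kernelConv K (partialT u · t) x) :=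
    continuous_kernelConv_of_periodic hK hut_cont hT (periodic_partialT hper)
  have hFc : Continuous F := continuous_iff_continuousAt.2 fun y => (hF y).continuousAt
  let Φ' : ℝ → ℝ → ℝ := fun x t => f (u x t) * partialT u x t
    + 1 / 2 * (partialT u x t * kernelConv K (u · t) x + u x t * kernelConv K (partialT u · t) x)
  have hΦ : ∀ x t, HasDerivAt (fun s => F (u x s) + 1 / 2 * u x s * kernelConv K (u · s) x)
      (Φ' x t) t := fun x t =>
    ((hF _).comp t (hasDerivAt_partialT hu_diff x t)).add
      (((hasDerivAt_partialT hu_diff x t).const_mul (1 / 2)).mul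
        (hasDerivAt_kernelConv_partialT hK hu hT hper x t)) |>.congr_deriv (by ring)
  have hΦc : ∀ t, Continuous fun x => F (u x t) + 1 / 2 * u x t * kernelConv K (u · t) x :=
    fun t => (hFc.comp (hslice hu_cont t)).add
      ((continuous_const.mul (hslice hu_cont t)).mul (hslice hconv t))
  have hΦ'c : Continuous (uncurry Φ') :=
    ((hf.comp hu_cont).mul hut_cont).add
      (continuous_const.mul ((hut_cont.mul hconv).add (hu_cont.mul hconvt)))
  exact (hasDerivAt_intervalIntegral_of_continuous_partial hΦc hΦ'c hΦ).congr_deriv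
    (intervalIntegral_mul_add_half_kernelConv hK hKeven (hf.comp (hslice hu_cont t₀))
      (hslice hu_cont t₀) (hslice hut_cont t₀) hT (hper t₀) (periodic_partialT hper t₀))

end Hamiltonian

theorem intervalIntegral_flux_mul_deriv_eq_zero {K f : ℝ → ℝ} {u : ℝ → ℝ → ℝ} {T : ℝ}
    (hK : Integrable K) (hf : ContDiff ℝ 1 f) (hu : ContDiff ℝ 1 (uncurry u)) (hT : 0 < T)
    (hper : ∀ t, Periodic (u · t) T) (t : ℝ) :
    ∫ x in 0..T, (f (u x t) + kernelConv K (u · t) x)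
      * (deriv f (u x t) * partialX u x t + kernelConv K (partialX u · t) x) = 0 := by
  have hslice : ∀ {g : ℝ → ℝ → ℝ}, Continuous (uncurry g) → Continuous (g · t) :=
    fun hg => hg.comp (continuous_id.prodMk continuous_const)
  have hu_diff := hu.differentiable one_ne_zero
  have hux_cont := continuous_partialX hu
  have hu₀ := hslice hu.continuous
  have hux₀ := hslice hux_cont
  have hconvx := (periodic_partialX hper t).continuous_kernelConv hK hux₀ hT
  have hf' := hf.continuous_deriv le_rfl
  obtain ⟨C₀, hC₀⟩ := (hper t).exists_abs_le hT.ne' hu₀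
  obtain ⟨C, hC⟩ := (periodic_partialX hper t).exists_abs_le hT.ne' hux₀
  refine (((hper t).comp f).add (hper t).kernelConv).intervalIntegral_mul_deriv_eq_zero
    (fun x => ?_) (by fun_prop)
  exact ((hf.differentiable one_ne_zero _).hasDerivAt.comp x (hasDerivAt_partialX hu_diff x t)).add
    (hasDerivAt_kernelConv hK hu₀ hux₀ (hasDerivAt_partialX hu_diff · t) hC₀ hC x)

/-- Conservation of the Hamiltonian `H(t) = ∫₀^{2π} [F(u) + ½ u · (K∗u)] dx`, where
`F' = f`, for `2π`-periodic (in `x`) classical solutions of the generalized Whitham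
equation `u_t + f(u)_x + K∗u_x = 0` with `K ∈ L¹(ℝ)` even and real-valued. -/
theorem whitham_hamiltonian_conserved
    (K : ℝ → ℝ) (hK : Integrable K) (hKeven : ∀ x, K (-x) = K x)
    (f F : ℝ → ℝ) (hf : ContDiff ℝ 1 f) (hF : ∀ x, HasDerivAt F (f x) x)
    (a b : ℝ) (u : ℝ → ℝ → ℝ) (hu : ContDiff ℝ 1 (Function.uncurry u))
    (hper : ∀ t, Function.Periodic (fun x => u x t) (2 * π))
    (hPDE : ∀ x : ℝ, ∀ t ∈ Set.Ioo a b,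
      deriv (fun s => u x s) t + deriv (fun y => f (u y t)) x
        + ∫ ξ : ℝ, K ξ * deriv (fun y => u y t) (x - ξ) = 0)
    (t₁ t₂ : ℝ) (ht₁ : t₁ ∈ Set.Ioo a b) (ht₂ : t₂ ∈ Set.Ioo a b) :
    (∫ x in (0:ℝ)..(2 * π),
        (F (u x t₁) + (1 / 2) * u x t₁ * ∫ ξ : ℝ, K ξ * u (x - ξ) t₁))
      = ∫ x in (0:ℝ)..(2 * π),
          (F (u x t₂) + (1 / 2) * u x t₂ * ∫ ξ : ℝ, K ξ * u (x - ξ) t₂) := by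
  have hu_diff := hu.differentiable one_ne_zero
  have hderiv : ∀ t ∈ Ioo a b, HasDerivAt (hamiltonian K F u (2 * π)) 0 t := fun t ht => by
    have hut : ∀ x, partialT u x t
        = -(deriv f (u x t) * partialX u x t + kernelConv K (partialX u · t) x) := fun x => by
      have hchain : HasDerivAt (fun y => f (u y t)) (deriv f (u x t) * partialX u x t) x :=
        (hf.differentiable one_ne_zero _).hasDerivAt.comp x (hasDerivAt_partialX hu_diff x t)
      have h := hPDE x t ht
      rw [hchain.deriv] at h
      change partialT u x t + _ + kernelConv K (partialX u · t) x = 0 at h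
      linarith
    convert hasDerivAt_hamiltonian hK hKeven hf.continuous hF hu two_pi_pos hper t using 1
    simp only [hut, mul_neg, intervalIntegral.integral_neg, neg_zero,
      intervalIntegral_flux_mul_deriv_eq_zero hK hf hu two_pi_pos hper t]
  exact isOpen_Ioo.is_const_of_deriv_eq_zero isPreconnected_Ioo
    (fun t ht => (hderiv t ht).differentiableAt.differentiableWithinAt)
    (fun t ht => (hderiv t ht).deriv) ht₁ ht₂
end

section
/- Let φ, φ_M, φ_P : ℝ → ℝ be continuous, even, 2π-periodic functions with φ continuously differentiable, satisfying ∫₀^{2π}φ_M(θ)dθ = 1, ∫₀^{2π}φ(θ)φ_P(θ)dθ = 1, ∫₀^{2π}φ_P(θ)dθ = 0, and ∫₀^{2π}φ(θ)φ_M(θ)dθ = 0. Define Φ₁ = φ', Φ₂ = φ_M, Φ₃ = φ_P, Ψ₁(θ) = −∫₀^θ φ_P(z)dz, Ψ₂ = 1, Ψ₃ = φ. Then Ψ₁ is 2π-periodic, and ⟨Ψ_j, Φ_ℓ⟩ = δ_{jℓ} for all j, ℓ ∈ {1,2,3}, where ⟨f,g⟩ = ∫₀^{2π} f(θ)g(θ)dθ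 and δ_{jℓ} is the Kronecker delta. -/
open MeasureTheory Real

/-!
The pairings with `Ψ₂ = 1` and `Ψ₃ = φ` are the normalisations of `φ_M` and `φ_P`, except
`⟨1, φ'⟩` and `⟨φ, φ'⟩ = ⟨1, (φ²/2)'⟩`, which vanish because the derivative of a periodic function
has zero mean. `Ψ₁` is minus the primitive of the even, mean-zero `φ_P`, hence periodic and odd.
So `⟨Ψ₁, φ_M⟩` and `⟨Ψ₁, φ_P⟩` are integrals of odd periodic functions over a period and vanish,
while integration by parts, with `Ψ₁(0) = Ψ₁(2π) = 0`, gives `⟨Ψ₁, φ'⟩ = ⟨φ_P, φ⟩ = 1`.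
-/

theorem intervalIntegral.integral_mul_deriv_eq_neg_deriv_mul_of_eq_zero {A : Type*}
    [NormedRing A] [NormedAlgebra ℝ A] [CompleteSpace A] {a b : ℝ} {u v u' v' : ℝ → A}
    (hu : ∀ x ∈ Set.uIcc a b, HasDerivAt u (u' x) x)
    (hv : ∀ x ∈ Set.uIcc a b, HasDerivAt v (v' x) x) (hu' : IntervalIntegrable u' volume a b)
    (hv' : IntervalIntegrable v' volume a b) (ha : u a = 0) (hb : u b = 0) :
    ∫ x in a..b, u x * v' x = -∫ x in a..b, u' x * v x := by
  rw [integral_mul_deriv_eq_deriv_mul hu hv hu' hv', ha, hb]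
  simp

namespace Function

variable {E : Type*} [NormedAddCommGroup E] [NormedSpace ℝ E]

theorem Periodic.intervalIntegral_eq_zero_of_odd {g : ℝ → E} {T : ℝ} (hp : Periodic g T)
    (ho : g.Odd) : ∫ x in 0..T, g x = 0 := by
  have hshift : ∫ x in -T..0, g x = ∫ x in 0..T, g x := by
    simpa using hp.intervalIntegral_add_eq (-T) 0
  have hreflect : -∫ x in 0..T, g x = ∫ x in -T..0, g x := by
    simpa [ho.eq] using intervalIntegral.integral_comp_neg (a := 0) (b := T) g
  rw [hshift, neg_eq_iff_add_eq_zero, ← two_smul ℝ] at hreflect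
  exact (smul_eq_zero.mp hreflect).resolve_left two_ne_zero

theorem Even.odd_primitive {f : ℝ → E} (he : f.Even) :
    Function.Odd fun θ => ∫ x in 0..θ, f x := by
  intro θ
  have h := intervalIntegral.integral_comp_neg (a := 0) (b := θ) f
  simp only [he.eq, neg_zero] at h
  show ∫ x in 0..-θ, f x = -∫ x in 0..θ, f x
  rw [h, intervalIntegral.integral_symm]

theorem Periodic.primitive_periodic {f : ℝ → E} {T : ℝ} (hp : Periodic f T)
    (hint : ∀ a b, IntervalIntegrable f volume a b) (hmean : ∫ x in 0..T, f x = 0) :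
    Periodic (fun θ => ∫ x in 0..θ, f x) T := by
  intro θ
  simpa [hmean] using hp.intervalIntegral_add_eq_add 0 θ hint

theorem Periodic.integral_deriv_eq_zero [CompleteSpace E] {f f' : ℝ → E} {T : ℝ}
    (hp : Periodic f T) (hf : ∀ x, HasDerivAt f (f' x) x)
    (hint : IntervalIntegrable f' volume 0 T) : ∫ x in 0..T, f' x = 0 := by
  rw [intervalIntegral.integral_eq_sub_of_hasDerivAt (fun x _ => hf x) hint, ← zero_add T,
    hp 0, sub_self]

theorem Periodic.integral_mul_deriv_self_eq_zero {f f' : ℝ → ℝ} {T : ℝ}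
    (hp : Periodic f T) (hf : ∀ x, HasDerivAt f (f' x) x) (hf' : Continuous f') :
    ∫ x in 0..T, f x * f' x = 0 := by
  have hsq : ∀ x, HasDerivAt (fun y => f y ^ 2 / 2) (f x * f' x) x := fun x =>
    (((hf x).pow 2).div_const 2).congr_deriv (by ring)
  have hcont : Continuous f := continuous_iff_continuousAt.mpr fun x => (hf x).continuousAt
  exact (hp.comp fun y => y ^ 2 / 2).integral_deriv_eq_zero hsq
    ((hcont.mul hf').intervalIntegrable _ _)

end Function

theorem generalized_kernel_biorthogonal_general
    (φ φd φM φP : ℝ → ℝ)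
    (hφPc : Continuous φP)
    (hφMe : ∀ θ, φM (-θ) = φM θ) (hφPe : ∀ θ, φP (-θ) = φP θ)
    (hφp : Function.Periodic φ (2 * π)) (hφMp : Function.Periodic φM (2 * π))
    (hφPp : Function.Periodic φP (2 * π))
    (hφd : ∀ θ, HasDerivAt φ (φd θ) θ) (hφdc : Continuous φd)
    (h1 : ∫ θ in (0:ℝ)..(2 * π), φM θ = 1)
    (h2 : ∫ θ in (0:ℝ)..(2 * π), φ θ * φP θ = 1)
    (h3 : ∫ θ in (0:ℝ)..(2 * π), φP θ = 0)
    (h4 : ∫ θ in (0:ℝ)..(2 * π), φ θ * φM θ = 0) :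
    Function.Periodic (fun θ : ℝ => -∫ z in (0:ℝ)..θ, φP z) (2 * π) ∧
    ∀ j ℓ : Fin 3,
      (∫ θ in (0:ℝ)..(2 * π),
        (![fun θ : ℝ => -∫ z in (0:ℝ)..θ, φP z, fun _ : ℝ => (1:ℝ), φ] j θ) *
          (![φd, φM, φP] ℓ θ))
        = if j = ℓ then 1 else 0 := by
  set Ψ₁ : ℝ → ℝ := fun θ => -∫ z in (0:ℝ)..θ, φP z
  have hΨ₁p : Function.Periodic Ψ₁ (2 * π) :=
    (hφPp.primitive_periodic hφPc.intervalIntegrable h3).comp Neg.neg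
  have hΨ₁o : Ψ₁.Odd := fun θ => congrArg Neg.neg (Function.Even.odd_primitive hφPe θ)
  have hΨ₁d : ∀ θ, HasDerivAt Ψ₁ (-φP θ) θ := fun θ =>
    (intervalIntegral.integral_hasDerivAt_right (hφPc.intervalIntegrable 0 θ)
      (hφPc.stronglyMeasurableAtFilter _ _) hφPc.continuousAt).neg
  refine ⟨hΨ₁p, fun j ℓ => ?_⟩
  fin_cases j <;> fin_cases ℓ <;>
    simp only [Nat.succ_eq_add_one, Nat.reduceAdd, Fin.zero_eta, Fin.mk_one, Fin.reduceFinMk,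
      Fin.isValue, Fin.reduceEq, Matrix.cons_val', Matrix.cons_val_fin_one, Matrix.cons_val_zero,
      Matrix.cons_val_one, Matrix.cons_val, one_mul, zero_ne_one, one_ne_zero, ↓reduceIte]
  · rw [intervalIntegral.integral_mul_deriv_eq_neg_deriv_mul_of_eq_zero (fun x _ => hΨ₁d x)
      (fun x _ => hφd x) (hφPc.neg.intervalIntegrable _ _) (hφdc.intervalIntegrable _ _)
      (by simp [Ψ₁]) (by simp [Ψ₁, h3])]
    simpa [mul_comm] using h2
  · exact (hΨ₁p.mul hφMp).intervalIntegral_eq_zero_of_odd (hΨ₁o.mul_even hφMe)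
  · exact (hΨ₁p.mul hφPp).intervalIntegral_eq_zero_of_odd (hΨ₁o.mul_even hφPe)
  · exact hφp.integral_deriv_eq_zero hφd (hφdc.intervalIntegrable _ _)
  · exact h1
  · exact h3
  · exact hφp.integral_mul_deriv_self_eq_zero hφd hφdc
  · exact h4
  · exact h2

/-- Biorthogonality of the right basis `{Φ_ℓ} = {φ', φ_M, φ_P}` and left basis
`{Ψ_j} = {−∫₀^θ φ_P, 1, φ}` of the generalized kernel of the linearized operator
(Proposition 4.1 of the paper). -/
theorem generalized_kernel_biorthogonal
    (φ φd φM φP : ℝ → ℝ)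
    (hφc : Continuous φ) (hφMc : Continuous φM) (hφPc : Continuous φP)
    (hφe : ∀ θ, φ (-θ) = φ θ) (hφMe : ∀ θ, φM (-θ) = φM θ) (hφPe : ∀ θ, φP (-θ) = φP θ)
    (hφp : Function.Periodic φ (2 * π)) (hφMp : Function.Periodic φM (2 * π))
    (hφPp : Function.Periodic φP (2 * π))
    (hφd : ∀ θ, HasDerivAt φ (φd θ) θ) (hφdc : Continuous φd)
    (h1 : ∫ θ in (0:ℝ)..(2 * π), φM θ = 1)
    (h2 : ∫ θ in (0:ℝ)..(2 * π), φ θ * φP θ = 1)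
    (h3 : ∫ θ in (0:ℝ)..(2 * π), φP θ = 0)
    (h4 : ∫ θ in (0:ℝ)..(2 * π), φ θ * φM θ = 0) :
    Function.Periodic (fun θ : ℝ => -∫ z in (0:ℝ)..θ, φP z) (2 * π) ∧
    ∀ j ℓ : Fin 3,
      (∫ θ in (0:ℝ)..(2 * π),
        (![fun θ : ℝ => -∫ z in (0:ℝ)..θ, φP z, fun _ : ℝ => (1:ℝ), φ] j θ) *
          (![φd, φM, φP] ℓ θ))
        = if j = ℓ then 1 else 0 :=
  generalized_kernel_biorthogonal_general φ φd φM φP hφPc hφMe hφPe hφp hφMp hφPp hφd hφdc h1 h2 h3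
    h4
end

section
/- Let K : ℝ → ℝ be even with K ∈ L¹(ℝ) and ξ ↦ ξK(ξ) ∈ L¹(ℝ), let k ∈ ℝ, and let u, v : ℝ → ℂ be continuously differentiable 2π-periodic functions. Then ⟨u, K∗_θv − k·K₁∗_θv'⟩ = ⟨K∗_θu − k·K₁∗_θu', v⟩, where (K∗_θw)(θ) = ∫_ℝ K(ξ)w(θ−kξ)dξ, (K₁∗_θw)(θ) = ∫_ℝ ξK(ξ)w(θ−kξ)dξ, and ⟨f,g⟩ = ∫₀^{2π} f(θ) conj(g(θ))dθ. -/
/-!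
After Fubini and a shift by a period, both `⟨u, K∗v⟩` and `⟨K∗u, v⟩` become integrals of
`⟨u(· + kξ), v⟩` against the kernel, once as `K(ξ)` and once as `K(-ξ)`; evenness of `K` matches
them. In the `K₁` term, integrating by parts over a period moves the derivative from `v` to `u`
at the cost of a sign, and the oddness of `ξ K(ξ)` restores it.
-/

open MeasureTheory Real ComplexConjugate Function Filter

/-- `scaledConv K k w` is the paper's `K∗_θ w`, and `scaledConv (fun ξ => ξ * K ξ) k w` is
`K₁∗_θ w`. -/
noncomputable def scaledConv (f : ℝ → ℝ) (k : ℝ) (w : ℝ → ℂ) (θ : ℝ) : ℂ :=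
  ∫ ξ, (f ξ : ℂ) * w (θ - k * ξ)

noncomputable def periodInner (T : ℝ) (f g : ℝ → ℂ) : ℂ :=
  ∫ θ in 0..T, f θ * conj (g θ)

namespace Function.Periodic

variable {E : Type*} [NormedAddCommGroup E] {T : ℝ} {w w' : ℝ → E}

lemma exists_norm_le_of_continuous (hw : Periodic w T) (hT : T ≠ 0) (hc : Continuous w) :
    ∃ C, ∀ x, ‖w x‖ ≤ C :=
  (isBounded_iff_forall_norm_le.1 (hw.isBounded_of_continuous hT hc)).imp
    fun _ hC x => hC _ ⟨x, rfl⟩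

variable [NormedSpace ℝ E]

lemma of_hasDerivAt (hw : Periodic w T) (h : ∀ x, HasDerivAt w (w' x) x) : Periodic w' T := by
  intro x
  have hshift := (h (x + T)).comp_add_const x T
  rw [show (fun y => w (y + T)) = w from funext hw] at hshift
  exact hshift.unique (h x)

lemma intervalIntegral_comp_sub_eq (hw : Periodic w T) (c : ℝ) :
    ∫ x in 0..T, w (x - c) = ∫ x in 0..T, w x := by
  rw [intervalIntegral.integral_comp_sub_right, sub_eq_neg_add T c, zero_sub]
  simpa using hw.intervalIntegral_add_eq (-c) 0

end Function.Periodic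

lemma intervalIntegral_integral_ofReal_mul_swap {f : ℝ → ℝ} (hf : Integrable f)
    {G : ℝ → ℝ → ℂ} (hG : Continuous (uncurry G)) {C : ℝ} (hC : ∀ θ ξ, ‖G θ ξ‖ ≤ C)
    (a b : ℝ) :
    ∫ θ in a..b, ∫ ξ, (f ξ : ℂ) * G θ ξ = ∫ ξ, (f ξ : ℂ) * ∫ θ in a..b, G θ ξ := by
  have : IsFiniteMeasure (volume.restrict (Set.uIoc a b)) := isFiniteMeasure_restrict_Ioc _ _
  have hint : Integrable (uncurry fun θ ξ => (f ξ : ℂ) * G θ ξ)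
      ((volume.restrict (Set.uIoc a b)).prod volume) :=
    ((hf.ofReal (𝕜 := ℂ)).comp_snd _).mul_bdd hG.aestronglyMeasurable
      (Eventually.of_forall fun z => hC z.1 z.2)
  simp_rw [intervalIntegral_integral_swap hint, intervalIntegral.integral_const_mul]

lemma continuous_scaledConv {f : ℝ → ℝ} (hf : Integrable f) (k : ℝ) {w : ℝ → ℂ}
    (hw : Continuous w) {C : ℝ} (hC : ∀ x, ‖w x‖ ≤ C) : Continuous (scaledConv f k w) := by
  refine continuous_of_dominated (bound := fun ξ => ‖f ξ‖ * C) (fun θ => ?_) (fun θ => ?_)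
    (hf.norm.mul_const C) (Eventually.of_forall fun ξ => by fun_prop)
  · exact hf.ofReal.aestronglyMeasurable.mul (by fun_prop : Continuous _).aestronglyMeasurable
  · refine Eventually.of_forall fun ξ => ?_
    rw [norm_mul, Complex.norm_real]
    exact mul_le_mul_of_nonneg_left (hC _) (norm_nonneg _)

section periodInner

variable {T : ℝ} {A B D : ℝ → ℂ}

lemma periodInner_sub_mul_left (hA : Continuous A) (hB : Continuous B) (hD : Continuous D)
    (c : ℂ) :
    periodInner T (fun θ => A θ - c * D θ) B = periodInner T A B - c * periodInner T D B := by
  unfold periodInner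
  rw [← intervalIntegral.integral_const_mul, ← intervalIntegral.integral_sub
    ((by fun_prop : Continuous _).intervalIntegrable _ _)
    ((by fun_prop : Continuous _).intervalIntegrable _ _)]
  congr 1 with θ
  ring

lemma periodInner_sub_mul_right (hA : Continuous A) (hB : Continuous B) (hD : Continuous D)
    (c : ℝ) :
    periodInner T A (fun θ => B θ - c * D θ) = periodInner T A B - c * periodInner T A D := by
  unfold periodInner
  rw [← intervalIntegral.integral_const_mul, ← intervalIntegral.integral_sub
    ((by fun_prop : Continuous _).intervalIntegrable _ _)
    ((by fun_prop : Continuous _).intervalIntegrable _ _)]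
  congr 1 with θ
  simp only [map_sub, map_mul, Complex.conj_ofReal]
  ring

lemma periodInner_deriv_right {A' B' : ℝ → ℂ} (hA : ∀ x, HasDerivAt A (A' x) x)
    (hB : ∀ x, HasDerivAt B (B' x) x) (hA' : Continuous A') (hB' : Continuous B')
    (hAp : Periodic A T) (hBp : Periodic B T) :
    periodInner T A B' = -periodInner T A' B := by
  unfold periodInner
  have hB_conj (x : ℝ) : HasDerivAt (fun y => conj (B y)) (conj (B' x)) x := (hB x).star
  rw [intervalIntegral.integral_mul_deriv_eq_deriv_mul (fun x _ => hA x) (fun x _ => hB_conj x)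
    (hA'.intervalIntegrable _ _) ((by fun_prop : Continuous _).intervalIntegrable _ _)]
  simp only [hAp.eq, hBp.eq, sub_self, zero_sub]

variable {f : ℝ → ℝ} {k : ℝ}

lemma periodInner_scaledConv_right (hT : T ≠ 0) (hf : Integrable f) (hA : Continuous A)
    (hAp : Periodic A T) (hB : Continuous B) (hBp : Periodic B T) :
    periodInner T A (scaledConv f k B) =
      ∫ ξ, (f ξ : ℂ) * periodInner T (fun θ => A (θ + k * ξ)) B := by
  obtain ⟨CA, hCA⟩ := hAp.exists_norm_le_of_continuous hT hA
  obtain ⟨CB, hCB⟩ := hBp.exists_norm_le_of_continuous hT hB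
  have hG (θ ξ : ℝ) : ‖A θ * conj (B (θ - k * ξ))‖ ≤ CA * CB := by
    rw [norm_mul, Complex.norm_conj]
    exact mul_le_mul (hCA _) (hCB _) (norm_nonneg _) ((norm_nonneg _).trans (hCA 0))
  have hshift (ξ : ℝ) : ∫ θ in 0..T, A θ * conj (B (θ - k * ξ)) =
      periodInner T (fun θ => A (θ + k * ξ)) B := by
    have hp : Periodic (fun θ => A (θ + k * ξ) * conj (B θ)) T := fun θ => by
      simp only [add_right_comm θ T, hAp _, hBp θ]
    simpa [periodInner] using hp.intervalIntegral_comp_sub_eq (k * ξ)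
  calc periodInner T A (scaledConv f k B)
      = ∫ θ in 0..T, ∫ ξ, (f ξ : ℂ) * (A θ * conj (B (θ - k * ξ))) := by
        unfold periodInner scaledConv
        congr 1 with θ
        rw [← integral_conj, ← integral_const_mul]
        congr 1 with ξ
        simp only [map_mul, Complex.conj_ofReal]
        ring
    _ = ∫ ξ, (f ξ : ℂ) * ∫ θ in 0..T, A θ * conj (B (θ - k * ξ)) :=
        intervalIntegral_integral_ofReal_mul_swap hf (by fun_prop) hG 0 T
    _ = ∫ ξ, (f ξ : ℂ) * periodInner T (fun θ => A (θ + k * ξ)) B := by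
        simp only [hshift]

lemma periodInner_scaledConv_left (hT : T ≠ 0) (hf : Integrable f) (hA : Continuous A)
    (hAp : Periodic A T) (hB : Continuous B) (hBp : Periodic B T) :
    periodInner T (scaledConv f k A) B =
      ∫ ξ, (f (-ξ) : ℂ) * periodInner T (fun θ => A (θ + k * ξ)) B := by
  obtain ⟨CA, hCA⟩ := hAp.exists_norm_le_of_continuous hT hA
  obtain ⟨CB, hCB⟩ := hBp.exists_norm_le_of_continuous hT hB
  have hG (θ ξ : ℝ) : ‖A (θ - k * ξ) * conj (B θ)‖ ≤ CA * CB := by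
    rw [norm_mul, Complex.norm_conj]
    exact mul_le_mul (hCA _) (hCB _) (norm_nonneg _) ((norm_nonneg _).trans (hCA 0))
  calc periodInner T (scaledConv f k A) B
      = ∫ θ in 0..T, ∫ ξ, (f ξ : ℂ) * (A (θ - k * ξ) * conj (B θ)) := by
        unfold periodInner scaledConv
        congr 1 with θ
        rw [← integral_mul_const]
        congr 1 with ξ
        ring
    _ = ∫ ξ, (f ξ : ℂ) * ∫ θ in 0..T, A (θ - k * ξ) * conj (B θ) :=
        intervalIntegral_integral_ofReal_mul_swap hf (by fun_prop) hG 0 T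
    _ = ∫ ξ, (f (-ξ) : ℂ) * periodInner T (fun θ => A (θ + k * ξ)) B := by
        rw [← integral_neg_eq_self]
        simp only [periodInner, mul_neg, sub_neg_eq_add]

end periodInner

/-- The operator `K⁽¹⁾∗ g = K∗_θ g − k·K₁∗_θ g'` is symmetric on continuously
differentiable `2π`-periodic functions, for `K` even with `K, ξK(ξ) ∈ L¹(ℝ)`. -/
theorem K1_operator_symmetric
    (K : ℝ → ℝ) (hK : Integrable K) (hK1 : Integrable (fun ξ => ξ * K ξ))
    (hKeven : ∀ x, K (-x) = K x) (k : ℝ)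
    (u v u' v' : ℝ → ℂ)
    (hu : ∀ x, HasDerivAt u (u' x) x) (hu' : Continuous u')
    (hup : Function.Periodic u (2 * π))
    (hv : ∀ x, HasDerivAt v (v' x) x) (hv' : Continuous v')
    (hvp : Function.Periodic v (2 * π)) :
    (∫ θ in (0:ℝ)..(2 * π),
        u θ * (starRingEnd ℂ)
          ((∫ ξ : ℝ, (K ξ : ℂ) * v (θ - k * ξ))
            - k * ∫ ξ : ℝ, ((ξ * K ξ : ℝ) : ℂ) * v' (θ - k * ξ)))
      = ∫ θ in (0:ℝ)..(2 * π),
          ((∫ ξ : ℝ, (K ξ : ℂ) * u (θ - k * ξ))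
            - k * ∫ ξ : ℝ, ((ξ * K ξ : ℝ) : ℂ) * u' (θ - k * ξ))
            * (starRingEnd ℂ) (v θ) := by
  have hT : 2 * π ≠ 0 := by positivity
  have hu_cont : Continuous u := continuous_iff_continuousAt.2 fun x => (hu x).continuousAt
  have hv_cont : Continuous v := continuous_iff_continuousAt.2 fun x => (hv x).continuousAt
  have hup' := hup.of_hasDerivAt hu
  have hvp' := hvp.of_hasDerivAt hv
  have hconv {f : ℝ → ℝ} (hf : Integrable f) {w : ℝ → ℂ} (hw : Continuous w)
      (hwp : Periodic w (2 * π)) : Continuous (scaledConv f k w) :=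
    (hwp.exists_norm_le_of_continuous hT hw).elim fun _ hC => continuous_scaledConv hf k hw hC
  have hK_term : periodInner (2 * π) u (scaledConv K k v) =
      periodInner (2 * π) (scaledConv K k u) v := by
    rw [periodInner_scaledConv_right hT hK hu_cont hup hv_cont hvp,
      periodInner_scaledConv_left hT hK hu_cont hup hv_cont hvp]
    simp only [hKeven]
  have hK1_term : periodInner (2 * π) u (scaledConv (fun ξ => ξ * K ξ) k v') =
      periodInner (2 * π) (scaledConv (fun ξ => ξ * K ξ) k u') v := by
    rw [periodInner_scaledConv_right hT hK1 hu_cont hup hv' hvp',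
      periodInner_scaledConv_left hT hK1 hu' hup' hv_cont hvp]
    congr 1 with ξ
    rw [periodInner_deriv_right (fun x => (hu (x + k * ξ)).comp_add_const x (k * ξ)) hv
      (by fun_prop) hv' (fun x => by simp only [add_right_comm x (2 * π), hup _]) hvp, hKeven]
    push_cast
    ring
  change periodInner (2 * π) u
      (fun θ => scaledConv K k v θ - k * scaledConv (fun ξ => ξ * K ξ) k v' θ) =
    periodInner (2 * π)
      (fun θ => scaledConv K k u θ - k * scaledConv (fun ξ => ξ * K ξ) k u' θ) v
  rw [periodInner_sub_mul_right hu_cont (hconv hK hv_cont hvp) (hconv hK1 hv' hvp'),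
    periodInner_sub_mul_left (hconv hK hu_cont hup) hv_cont (hconv hK1 hu' hup'), hK_term,
    hK1_term]
end

section
/- Let K : ℝ → ℝ be even with K ∈ L¹(ℝ) and ξ ↦ ξK(ξ) ∈ L¹(ℝ), let k ∈ ℝ with k ≠ 0, let g : ℝ → ℂ be a continuously differentiable 2π-periodic function, and let n ∈ ℤ. Then K̂(q) = ∫_ℝ K(ξ)e^{−iqξ}dξ is differentiable, and the n-th Fourier coefficient of the 2π-periodic function θ ↦ (K∗_θg)(θ) − k(K₁∗_θg')(θ) equals (K̂(nk) + nk·K̂'(nk))·ĝ(n), i.e. it equals Ω'(nk)ĝ(n) where Ω(q) = qK̂(q). -/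
/-! Fubini's theorem and the translation invariance of `∫₀^{2π}` for periodic functions give
`(f ∗_θ h)^(n) = f̂(nk) ĥ(n)`, integration by parts gives `ĝ'(n) = in ĝ(n)`, and differentiating
under the integral sign (in Mathlib's normalization `𝓕 f (q / 2π) = f̂(q)`) gives
`K̂' = -i (ξK)^`. Hence the coefficient is
`K̂(nk) - k (ξK)^(nk) in ĝ(n) = (K̂(nk) + nk K̂'(nk)) ĝ(n)`. -/

open MeasureTheory Real

/-- The Fourier transform `K̂(q) = ∫ K(ξ) e^{−iqξ} dξ` of `K`. -/
noncomputable def fourierKernel (K : ℝ → ℝ) (q : ℝ) : ℂ :=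
  ∫ ξ : ℝ, (K ξ : ℂ) * Complex.exp (-Complex.I * q * ξ)

open scoped FourierTransform

lemma Function.Periodic.periodic_of_hasDerivAt {E : Type*} [NormedAddCommGroup E]
    [NormedSpace ℝ E] {g g' : ℝ → E} {c : ℝ} (hgp : Function.Periodic g c)
    (hg : ∀ x, HasDerivAt g (g' x) x) :
    Function.Periodic g' c := fun x => by
  have h := (hg (x + c)).comp_add_const x c
  rw [show (fun y => g (y + c)) = g from funext hgp] at h
  exact h.unique (hg x)

lemma Function.Periodic.exists_forall_norm_le {E : Type*} [SeminormedAddCommGroup E]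
    {h : ℝ → E} {c : ℝ} (hp : Function.Periodic h c) (hc : c ≠ 0) (hh : Continuous h) :
    ∃ C, ∀ x, ‖h x‖ ≤ C := by
  obtain ⟨C, hC⟩ := (hp.isBounded_of_continuous hc hh).exists_norm_le
  exact ⟨C, fun x => hC _ (Set.mem_range_self x)⟩

lemma Function.Periodic.intervalIntegral_comp_sub_eq_s10 {E : Type*} [NormedAddCommGroup E]
    [NormedSpace ℝ E] {H : ℝ → E} {T : ℝ} (hH : Function.Periodic H T) (a : ℝ) :
    ∫ θ in (0:ℝ)..T, H (θ - a) = ∫ θ in (0:ℝ)..T, H θ := by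
  rw [intervalIntegral.integral_comp_sub_right, zero_sub, sub_eq_neg_add]
  simpa using hH.intervalIntegral_add_eq (-a) 0

lemma periodic_exp_neg_I_int_mul (n : ℤ) :
    Function.Periodic (fun θ : ℝ => Complex.exp (-Complex.I * n * θ)) (2 * π) := fun θ => by
  have h : -Complex.I * n * ((2 * π : ℝ) : ℂ) = (-n : ℤ) * (2 * π * Complex.I) := by
    push_cast; ring
  simp only [Complex.ofReal_add, mul_add, Complex.exp_add, h, Complex.exp_int_mul_two_pi_mul_I,
    mul_one]

lemma hasDerivAt_exp_mul_ofReal (a : ℂ) (x : ℝ) :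
    HasDerivAt (fun θ : ℝ => Complex.exp (a * θ)) (a * Complex.exp (a * x)) x := by
  simpa [mul_comm] using ((hasDerivAt_id x).ofReal_comp.const_mul a).cexp

lemma fourierKernel_eq_fourier (K : ℝ → ℝ) (q : ℝ) :
    fourierKernel K q = 𝓕 (fun ξ => (K ξ : ℂ)) (q / (2 * π)) := by
  rw [Real.fourier_real_eq_integral_exp_smul, fourierKernel]
  congr 1 with ξ
  rw [smul_eq_mul, mul_comm]
  congr 1
  push_cast
  field_simp

lemma hasDerivAt_fourierKernel {K : ℝ → ℝ} (hK : Integrable K)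
    (hK1 : Integrable fun ξ => ξ * K ξ) (q : ℝ) :
    HasDerivAt (fourierKernel K) (-Complex.I * fourierKernel (fun ξ => ξ * K ξ) q) q := by
  have hF : Integrable fun ξ => (K ξ : ℂ) := hK.ofReal (𝕜 := ℂ)
  have hF1 : Integrable fun ξ : ℝ => ξ • (K ξ : ℂ) := by
    simpa [Complex.real_smul] using hK1.ofReal (𝕜 := ℂ)
  have h := (Real.hasDerivAt_fourier hF hF1 (q / (2 * π))).scomp q
    ((hasDerivAt_id' q).div_const (2 * π))
  rw [show fourierKernel K = _ from funext (fourierKernel_eq_fourier K)]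
  refine h.congr_deriv ?_
  rw [Real.fourier_real_eq_integral_exp_smul, fourierKernel, ← integral_const_mul,
    ← integral_smul]
  congr 1 with ξ
  simp only [smul_eq_mul, Complex.real_smul]
  push_cast
  field_simp

lemma integral_deriv_mul_exp_of_periodic {g g' : ℝ → ℂ} (hg : ∀ x, HasDerivAt g (g' x) x)
    (hg' : IntervalIntegrable g' volume 0 (2 * π)) (hgp : Function.Periodic g (2 * π)) (n : ℤ) :
    ∫ θ in (0:ℝ)..(2 * π), g' θ * Complex.exp (-Complex.I * n * θ)
      = Complex.I * n * ∫ θ in (0:ℝ)..(2 * π), g θ * Complex.exp (-Complex.I * n * θ) := by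
  have hep := periodic_exp_neg_I_int_mul n
  have hibp := intervalIntegral.integral_mul_deriv_eq_deriv_mul
    (fun θ _ => hasDerivAt_exp_mul_ofReal (-Complex.I * n) θ) (fun θ _ => hg θ)
    ((by fun_prop : Continuous _).intervalIntegrable _ _) hg'
  have he : Complex.exp (-Complex.I * n * ((2 * π : ℝ) : ℂ))
      = Complex.exp (-Complex.I * n * (0 : ℝ)) := by
    simpa using hep 0
  rw [show g (2 * π) = g 0 by simpa using hgp 0, he, sub_self, zero_sub] at hibp
  simp_rw [mul_comm (g' _), hibp, ← intervalIntegral.integral_const_mul,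
    ← intervalIntegral.integral_neg]
  congr 1 with θ
  ring

lemma continuous_integral_mul_comp_sub {f : ℝ → ℝ} (hf : Integrable f) {h : ℝ → ℂ}
    (hh : Continuous h) {C : ℝ} (hC : ∀ x, ‖h x‖ ≤ C) (k : ℝ) :
    Continuous fun θ => ∫ ξ, (f ξ : ℂ) * h (θ - k * ξ) := by
  refine continuous_of_dominated (bound := fun ξ => ‖f ξ‖ * C) (fun θ => ?_) (fun θ => ?_)
    (hf.norm.mul_const C) (Filter.Eventually.of_forall fun ξ => by fun_prop)
  · exact (hf.ofReal (𝕜 := ℂ)).1.mul (by fun_prop : Continuous _).aestronglyMeasurable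
  · filter_upwards with ξ
    rw [norm_mul, Complex.norm_real]
    exact mul_le_mul_of_nonneg_left (hC _) (norm_nonneg _)

lemma integral_integral_mul_comp_sub_mul_exp {f : ℝ → ℝ} (hf : Integrable f) {h : ℝ → ℂ}
    (hh : Continuous h) {C : ℝ} (hC : ∀ x, ‖h x‖ ≤ C) (hhp : Function.Periodic h (2 * π))
    (k : ℝ) (n : ℤ) :
    ∫ θ in (0:ℝ)..(2 * π), (∫ ξ, (f ξ : ℂ) * h (θ - k * ξ)) * Complex.exp (-Complex.I * n * θ)
      = fourierKernel f (n * k) *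
          ∫ θ in (0:ℝ)..(2 * π), h θ * Complex.exp (-Complex.I * n * θ) := by
  set e : ℝ → ℂ := fun θ => Complex.exp (-Complex.I * n * θ)
  have hint : Integrable (Function.uncurry fun θ ξ => (f ξ : ℂ) * h (θ - k * ξ) * e θ)
      ((volume.restrict (Set.Ioc 0 (2 * π))).prod volume) := by
    refine Integrable.mono' ((integrable_const C).mul_prod hf.norm) ?_ ?_
    · exact ((hf.ofReal (𝕜 := ℂ)).1.comp_snd.mul
        (by fun_prop : Continuous fun p : ℝ × ℝ => h (p.1 - k * p.2)).aestronglyMeasurable).mul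
        (by fun_prop : Continuous fun p : ℝ × ℝ => e p.1).aestronglyMeasurable
    · filter_upwards with ⟨θ, ξ⟩
      simpa [e, Complex.norm_exp, mul_comm C] using
        mul_le_mul_of_nonneg_left (hC (θ - k * ξ)) (abs_nonneg (f ξ))
  have hH : Function.Periodic (fun θ => h θ * e θ) (2 * π) :=
    hhp.mul (periodic_exp_neg_I_int_mul n)
  have hshift : ∀ ξ, ∫ θ in (0:ℝ)..(2 * π), (f ξ : ℂ) * h (θ - k * ξ) * e θ
      = (f ξ : ℂ) * Complex.exp (-Complex.I * (n * k : ℝ) * ξ) *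
          ∫ θ in (0:ℝ)..(2 * π), h θ * e θ := by
    intro ξ
    have hsplit : ∀ θ : ℝ, (f ξ : ℂ) * h (θ - k * ξ) * e θ
        = (f ξ : ℂ) * Complex.exp (-Complex.I * (n * k : ℝ) * ξ) *
            (h (θ - k * ξ) * e (θ - k * ξ)) := by
      intro θ
      simp only [e, mul_assoc, mul_left_comm _ (h _), ← Complex.exp_add]
      push_cast
      ring_nf
    simp_rw [hsplit, intervalIntegral.integral_const_mul]
    rw [hH.intervalIntegral_comp_sub_eq_s10 (k * ξ)]
  calc _ = ∫ θ in (0:ℝ)..(2 * π), ∫ ξ, (f ξ : ℂ) * h (θ - k * ξ) * e θ := by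
        simp_rw [e, integral_mul_const]
    _ = ∫ ξ, ∫ θ in (0:ℝ)..(2 * π), (f ξ : ℂ) * h (θ - k * ξ) * e θ := by
        simp_rw [intervalIntegral.integral_of_le two_pi_pos.le]
        exact integral_integral_swap hint
    _ = _ := by
        simp_rw [hshift, integral_mul_const, fourierKernel, e]

theorem K1_operator_fourier_multiplier_general
    (K : ℝ → ℝ) (hK : Integrable K) (hK1 : Integrable (fun ξ => ξ * K ξ))
    (k : ℝ)
    (g g' : ℝ → ℂ) (hg : ∀ x, HasDerivAt g (g' x) x) (hg' : Continuous g')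
    (hgp : Function.Periodic g (2 * π)) (n : ℤ) :
    Differentiable ℝ (fourierKernel K) ∧
    (1 / (2 * π) : ℂ) *
        ∫ θ in (0:ℝ)..(2 * π),
          ((∫ ξ : ℝ, (K ξ : ℂ) * g (θ - k * ξ))
            - k * ∫ ξ : ℝ, ((ξ * K ξ : ℝ) : ℂ) * g' (θ - k * ξ))
            * Complex.exp (-Complex.I * n * θ)
      = (fourierKernel K ((n : ℝ) * k) + ((n : ℝ) * k : ℝ) * deriv (fourierKernel K) ((n : ℝ) * k)) *
          ((1 / (2 * π) : ℂ) *
            ∫ θ in (0:ℝ)..(2 * π), g θ * Complex.exp (-Complex.I * n * θ)) := by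
  refine ⟨fun q => (hasDerivAt_fourierKernel hK hK1 q).differentiableAt, ?_⟩
  have hgc : Continuous g := continuous_iff_continuousAt.2 fun x => (hg x).continuousAt
  have hg'p := hgp.periodic_of_hasDerivAt hg
  obtain ⟨C, hC⟩ := hgp.exists_forall_norm_le two_pi_pos.ne' hgc
  obtain ⟨C', hC'⟩ := hg'p.exists_forall_norm_le two_pi_pos.ne' hg'
  have he : Continuous fun θ : ℝ => Complex.exp (-Complex.I * n * θ) := by fun_prop
  have hA := ((continuous_integral_mul_comp_sub hK hgc hC k).mul he).intervalIntegrable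
    (μ := volume) 0 (2 * π)
  have hB := ((continuous_integral_mul_comp_sub hK1 hg' hC' k).mul he).intervalIntegrable
    (μ := volume) 0 (2 * π)
  simp only [Pi.mul_def] at hA hB
  simp only [sub_mul, mul_assoc (k : ℂ)]
  rw [intervalIntegral.integral_sub hA (hB.const_mul _), intervalIntegral.integral_const_mul,
    integral_integral_mul_comp_sub_mul_exp hK hgc hC hgp,
    integral_integral_mul_comp_sub_mul_exp hK1 hg' hC' hg'p,
    integral_deriv_mul_exp_of_periodic hg (hg'.intervalIntegrable _ _) hgp,
    (hasDerivAt_fourierKernel hK hK1 _).deriv]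
  push_cast
  ring

/-- The operator `K⁽¹⁾∗ g = K∗_θ g − k·K₁∗_θ g'` is the Fourier multiplier with
symbol `Ω'(nk) = K̂(nk) + nk·K̂'(nk)`, where `Ω(q) = qK̂(q)`. -/
theorem K1_operator_fourier_multiplier
    (K : ℝ → ℝ) (hK : Integrable K) (hK1 : Integrable (fun ξ => ξ * K ξ))
    (hKeven : ∀ x, K (-x) = K x) (k : ℝ) (hk : k ≠ 0)
    (g g' : ℝ → ℂ) (hg : ∀ x, HasDerivAt g (g' x) x) (hg' : Continuous g')
    (hgp : Function.Periodic g (2 * π)) (n : ℤ) :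
    Differentiable ℝ (fourierKernel K) ∧
    (1 / (2 * π) : ℂ) *
        ∫ θ in (0:ℝ)..(2 * π),
          ((∫ ξ : ℝ, (K ξ : ℂ) * g (θ - k * ξ))
            - k * ∫ ξ : ℝ, ((ξ * K ξ : ℝ) : ℂ) * g' (θ - k * ξ))
            * Complex.exp (-Complex.I * n * θ)
      = (fourierKernel K ((n : ℝ) * k) + ((n : ℝ) * k : ℝ) * deriv (fourierKernel K) ((n : ℝ) * k)) *
          ((1 / (2 * π) : ℂ) *
            ∫ θ in (0:ℝ)..(2 * π), g θ * Complex.exp (-Complex.I * n * θ)) :=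
  K1_operator_fourier_multiplier_general K hK hK1 k g g' hg hg' hgp n
end

section
/- Let k ∈ ℝ with k ≠ 0, let μ₁, μ₂, μ₃ ∈ ℝ be pairwise distinct, let δ₀ > 0 and C ≥ 0, and let λ₁, λ₂, λ₃ : (−δ₀, δ₀) → ℂ satisfy |λ_j(τ) − ikτμ_j| ≤ Cτ² for all j ∈ {1,2,3} and all τ ∈ (−δ₀, δ₀). Suppose that for every τ ∈ (−δ₀, δ₀) and every j ∈ {1,2,3} there exists ℓ ∈ {1,2,3} with −conj(λ_j(τ)) = λ_ℓ(τ). Then there exists δ ∈ (0, δ₀] such that Re λ_j(τ) = 0 for all |τ| < δ and all j ∈ {1,2,3}. -/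
open Complex

/-- If three eigenvalue branches `λ_j(τ) = ikτμ_j + O(τ²)` with distinct real
leading coefficients `μ_j` are, for each `τ`, invariant as a set under
`λ ↦ −conj(λ)`, then near `τ = 0` all branches are purely imaginary. -/
theorem hamiltonian_symmetry_forces_imaginary
    (k : ℝ) (hk : k ≠ 0) (μ : Fin 3 → ℝ) (hμ : Function.Injective μ)
    (δ₀ : ℝ) (hδ₀ : 0 < δ₀) (C : ℝ) (hC : 0 ≤ C)
    (lam : Fin 3 → ℝ → ℂ)
    (hbound : ∀ j : Fin 3, ∀ τ ∈ Set.Ioo (-δ₀) δ₀,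
      ‖lam j τ - Complex.I * (k : ℂ) * (τ : ℂ) * (μ j : ℂ)‖ ≤ C * τ ^ 2)
    (hsym : ∀ τ ∈ Set.Ioo (-δ₀) δ₀, ∀ j : Fin 3,
      ∃ ℓ : Fin 3, -(starRingEnd ℂ) (lam j τ) = lam ℓ τ) :
    ∃ δ, 0 < δ ∧ δ ≤ δ₀ ∧ ∀ τ : ℝ, |τ| < δ → ∀ j : Fin 3, (lam j τ).re = 0 := by
  classical
  -- minimal gap between the μ's
  set s : Finset (Fin 3 × Fin 3) := Finset.univ.filter (fun p => p.1 ≠ p.2) with hs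
  have hsne : s.Nonempty := ⟨(0, 1), by simp [hs]⟩
  set g : ℝ := s.inf' hsne (fun p => |μ p.1 - μ p.2|) with hg
  have hgpos : 0 < g := by
    rw [hg]
    refine (Finset.lt_inf'_iff hsne).mpr ?_
    intro p hp
    have hne : p.1 ≠ p.2 := by simpa [hs] using hp
    have : μ p.1 ≠ μ p.2 := fun h => hne (hμ h)
    exact abs_pos.mpr (sub_ne_zero.mpr this)
  have hgle : ∀ i j : Fin 3, i ≠ j → g ≤ |μ i - μ j| := by
    intro i j hij
    have hmem : (i, j) ∈ s := by
      rw [hs]; exact Finset.mem_filter.mpr ⟨Finset.mem_univ _, hij⟩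
    exact Finset.inf'_le _ hmem
  have hkpos : 0 < |k| := abs_pos.mpr hk
  have hCpos : 0 < 2 * C + 1 := by linarith
  refine ⟨min δ₀ (|k| * g / (2 * C + 1)), ?_, min_le_left _ _, ?_⟩
  · exact lt_min hδ₀ (by positivity)
  intro τ hτ j
  have hτδ₀ : τ ∈ Set.Ioo (-δ₀) δ₀ := by
    have := lt_of_lt_of_le hτ (min_le_left _ _)
    constructor <;> [linarith [neg_abs_le τ]; linarith [le_abs_self τ]]
  rcases eq_or_ne τ 0 with rfl | hτ0
  · have h := hbound j 0 hτδ₀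
    simp only [Complex.ofReal_zero, mul_zero, zero_mul, sub_zero, ne_eq,
      OfNat.ofNat_ne_zero, not_false_eq_true, zero_pow] at h
    have h0 : lam j 0 = 0 := norm_le_zero_iff.mp h
    simp [h0]
  · obtain ⟨ℓ, hℓ⟩ := hsym τ hτδ₀ j
    -- bound for -conj (lam j τ)
    have hb1 : ‖-(starRingEnd ℂ) (lam j τ) - Complex.I * (k : ℂ) * (τ : ℂ) * (μ j : ℂ)‖
        ≤ C * τ ^ 2 := by
      have := hbound j τ hτδ₀
      calc ‖-(starRingEnd ℂ) (lam j τ) - Complex.I * (k : ℂ) * (τ : ℂ) * (μ j : ℂ)‖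
          = ‖-((starRingEnd ℂ) (lam j τ - Complex.I * (k : ℂ) * (τ : ℂ) * (μ j : ℂ)))‖ := by
            congr 1
            simp [map_sub, map_mul, Complex.conj_I]
            ring
        _ = ‖lam j τ - Complex.I * (k : ℂ) * (τ : ℂ) * (μ j : ℂ)‖ := by
            rw [norm_neg, RCLike.norm_conj]
        _ ≤ C * τ ^ 2 := this
    have hb2 := hbound ℓ τ hτδ₀
    rw [hℓ] at hb1
    have hdiff : ‖Complex.I * (k : ℂ) * (τ : ℂ) * (μ j : ℂ)
        - Complex.I * (k : ℂ) * (τ : ℂ) * (μ ℓ : ℂ)‖ ≤ 2 * (C * τ ^ 2) := by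
      calc ‖Complex.I * (k : ℂ) * (τ : ℂ) * (μ j : ℂ)
            - Complex.I * (k : ℂ) * (τ : ℂ) * (μ ℓ : ℂ)‖
          = ‖(lam ℓ τ - Complex.I * (k : ℂ) * (τ : ℂ) * (μ ℓ : ℂ))
            - (lam ℓ τ - Complex.I * (k : ℂ) * (τ : ℂ) * (μ j : ℂ))‖ := by ring_nf
        _ ≤ ‖lam ℓ τ - Complex.I * (k : ℂ) * (τ : ℂ) * (μ ℓ : ℂ)‖
            + ‖lam ℓ τ - Complex.I * (k : ℂ) * (τ : ℂ) * (μ j : ℂ)‖ := norm_sub_le _ _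
        _ ≤ 2 * (C * τ ^ 2) := by linarith
    have hnorm : ‖Complex.I * (k : ℂ) * (τ : ℂ) * (μ j : ℂ)
        - Complex.I * (k : ℂ) * (τ : ℂ) * (μ ℓ : ℂ)‖ = |k| * |τ| * |μ j - μ ℓ| := by
      have : Complex.I * (k : ℂ) * (τ : ℂ) * (μ j : ℂ)
          - Complex.I * (k : ℂ) * (τ : ℂ) * (μ ℓ : ℂ)
          = Complex.I * (k : ℂ) * (τ : ℂ) * ((μ j : ℂ) - (μ ℓ : ℂ)) := by ring
      rw [this, norm_mul, norm_mul, norm_mul, Complex.norm_I, one_mul,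
        ← Complex.ofReal_sub, Complex.norm_real, Complex.norm_real, Complex.norm_real]
      simp [Real.norm_eq_abs]
    have hjℓ : j = ℓ := by
      by_contra hne
      have hge := hgle j ℓ hne
      have hτpos : 0 < |τ| := abs_pos.mpr hτ0
      have hlt : |τ| < |k| * g / (2 * C + 1) := lt_of_lt_of_le hτ (min_le_right _ _)
      have h1 : |k| * |τ| * |μ j - μ ℓ| ≤ 2 * C * |τ| ^ 2 := by
        rw [← hnorm]
        calc _ ≤ 2 * (C * τ ^ 2) := hdiff
          _ = 2 * C * |τ| ^ 2 := by rw [_root_.sq_abs]; ring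
      have h2 : |k| * g ≤ |k| * |μ j - μ ℓ| :=
        mul_le_mul_of_nonneg_left hge (le_of_lt hkpos)
      have h3 : |k| * |μ j - μ ℓ| ≤ 2 * C * |τ| := by
        have := h1
        nlinarith
      have h4 : 2 * C * |τ| < |k| * g := by
        rw [lt_div_iff₀ hCpos] at hlt
        nlinarith
      linarith
    subst hjℓ
    have : -(lam j τ).re = (lam j τ).re := by
      have := congrArg Complex.re hℓ
      simpa using this
    linarith
end

section
/- Let j ∈ ℕ, let K : ℝ → ℝ be measurable with ξ ↦ ξ^jK(ξ) ∈ L¹(ℝ), let y : ℝ → ℝ be continuous and 2π-periodic, let k, θ, X ∈ ℝ, and let H : ℝ → ℝ be measurable. Assume: (i) for each ε ∈ (0,1], the function ξ ↦ ξ^jK(ξ)y(θ−kξ)H(X−εξ) belongs to L¹(ℝ); (ii) for every ξ ∈ ℝ, H(X−εξ) → 0 as ε → 0⁺; (iii) there exists ξ₀ > 0 such that s ↦ |H(X−s)| is monotone nondecreasing on [ξ₀, ∞), s ↦ |H(X+s)| is monotone nondecreasing on [ξ₀, ∞), and |H| is bounded on the interval [X−ξ₀, X+ξ₀]. Then lim_{ε→0⁺}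 ∫_ℝ ξ^jK(ξ)y(θ−kξ)H(X−εξ)dξ = 0. -/
/-!
The functions `ξ ↦ H (X - ε ξ)`, `0 < ε ≤ 1`, are dominated by `m + |H (X - ξ)|`: if `|ε ξ| ≤ ξ₀`
the bound `m` on `[X - ξ₀, X + ξ₀]` applies, and otherwise `ε ξ` lies between `ξ₀` (or `-ξ₀`)
and `ξ`, where `|H (X - ·)|` is monotone. Since `ξ ^ j K(ξ) y(θ - k ξ)` is integrable (`y` is
bounded) and so is its product with `H (X - ξ)` (the case `ε = 1`), dominated convergence applies.
-/

open MeasureTheory Real Filter Topology Set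

lemma le_max_of_monotoneOn_Ici {φ : ℝ → ℝ} {a m s t : ℝ} (hφ : MonotoneOn φ (Ici a))
    (hm : ∀ t ∈ Icc 0 a, φ t ≤ m) (ht : t ∈ Icc 0 s) : φ t ≤ max m (φ s) := by
  rcases le_or_gt t a with hta | hat
  · exact (hm t ⟨ht.1, hta⟩).trans (le_max_left _ _)
  · exact (hφ hat.le (hat.le.trans ht.2) ht.2).trans (le_max_right _ _)

lemma abs_comp_sub_mul_le {H : ℝ → ℝ} {X ξ₀ m ε : ℝ}
    (hL : MonotoneOn (fun s => |H (X - s)|) (Ici ξ₀))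
    (hR : MonotoneOn (fun s => |H (X + s)|) (Ici ξ₀))
    (hm : ∀ s ∈ Icc (X - ξ₀) (X + ξ₀), |H s| ≤ m) (hε : ε ∈ Icc (0 : ℝ) 1) (ξ : ℝ) :
    |H (X - ε * ξ)| ≤ |m| + |H (X - ξ)| := by
  suffices h : |H (X - ε * ξ)| ≤ max m |H (X - ξ)| from h.trans <|
    max_le (by linarith [le_abs_self m, abs_nonneg (H (X - ξ))]) (by linarith [abs_nonneg m])
  obtain ⟨hε0, hε1⟩ := hε
  rcases le_total 0 ξ with hξ | hξ
  · refine le_max_of_monotoneOn_Ici (φ := fun s => |H (X - s)|) hL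
      (fun t ⟨ht0, htξ₀⟩ => hm _ ⟨by linarith, by linarith⟩) ⟨by positivity, by nlinarith⟩
  · have := le_max_of_monotoneOn_Ici (φ := fun s => |H (X + s)|) (t := -(ε * ξ)) (s := -ξ) hR
      (fun t ⟨ht0, htξ₀⟩ => hm _ ⟨by linarith, by linarith⟩) ⟨by nlinarith, by nlinarith⟩
    simpa only [← sub_eq_add_neg] using this

lemma tendsto_integral_mul_of_dominated {α ι : Type*} [MeasurableSpace α] {μ : Measure α}
    {l : Filter ι} [l.IsCountablyGenerated] {f g : α → ℝ} {G : ι → α → ℝ} {c : ℝ}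
    (hf : Integrable f μ) (hfg : Integrable (fun x => f x * g x) μ)
    (hmeas : ∀ᶠ i in l, AEStronglyMeasurable (fun x => f x * G i x) μ)
    (hbound : ∀ᶠ i in l, ∀ x, |G i x| ≤ c + |g x|)
    (hlim : ∀ x, Tendsto (fun i => G i x) l (𝓝 0)) :
    Tendsto (fun i => ∫ x, f x * G i x ∂μ) l (𝓝 0) := by
  have hdom : Integrable (fun x => c * |f x| + |f x * g x|) μ :=
    (hf.abs.const_mul c).add hfg.abs
  have hdct := tendsto_integral_filter_of_dominated_convergence (f := fun _ => (0 : ℝ)) _ hmeas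
    (hbound.mono fun i hi => ae_of_all μ fun x => by
      rw [norm_mul, Real.norm_eq_abs, Real.norm_eq_abs, abs_mul (f x)]
      nlinarith [hi x, abs_nonneg (f x)])
    hdom (ae_of_all μ fun x => by simpa only [mul_zero] using (hlim x).const_mul (f x))
  rwa [integral_zero] at hdct

lemma integrable_mul_comp_of_periodic {f y : ℝ → ℝ} {p a b : ℝ} (hf : Integrable f)
    (hy : Continuous y) (hyp : Function.Periodic y p) (hp : p ≠ 0) :
    Integrable (fun x => f x * y (a + b * x)) := by
  obtain ⟨C, hC⟩ := isBounded_iff_forall_norm_le.1 (hyp.isBounded_of_continuous hp hy)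
  exact hf.mul_bdd (by fun_prop) (ae_of_all _ fun x => hC _ (mem_range_self _))

theorem remainder_convolution_tendsto_zero_general
    (j : ℕ) (K : ℝ → ℝ)
    (hKj : Integrable (fun ξ => ξ ^ j * K ξ))
    (y : ℝ → ℝ) (hy : Continuous y) (hyp : Function.Periodic y (2 * π))
    (k θ X : ℝ) (H : ℝ → ℝ)
    (hint : ∀ ε ∈ Set.Ioc (0:ℝ) 1,
      Integrable (fun ξ => ξ ^ j * K ξ * y (θ - k * ξ) * H (X - ε * ξ)))
    (hlim : ∀ ξ : ℝ, Tendsto (fun ε => H (X - ε * ξ)) (nhdsWithin 0 (Set.Ioi 0)) (nhds 0))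
    (hmono : ∃ ξ₀ > (0:ℝ),
      MonotoneOn (fun s => |H (X - s)|) (Set.Ici ξ₀) ∧
      MonotoneOn (fun s => |H (X + s)|) (Set.Ici ξ₀) ∧
      ∃ m, ∀ s ∈ Set.Icc (X - ξ₀) (X + ξ₀), |H s| ≤ m) :
    Tendsto (fun ε => ∫ ξ : ℝ, ξ ^ j * K ξ * y (θ - k * ξ) * H (X - ε * ξ))
      (nhdsWithin 0 (Set.Ioi 0)) (nhds 0) := by
  obtain ⟨ξ₀, -, hL, hR, m, hm⟩ := hmono
  have hunit : ∀ᶠ ε in 𝓝[>] (0 : ℝ), ε ∈ Ioc 0 1 := Ioc_mem_nhdsGT one_pos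
  have hf : Integrable fun ξ => ξ ^ j * K ξ * y (θ - k * ξ) := by
    simpa only [sub_eq_add_neg, neg_mul] using
      integrable_mul_comp_of_periodic (a := θ) (b := -k) hKj hy hyp (by positivity)
  refine tendsto_integral_mul_of_dominated (c := |m|) (g := fun ξ => H (X - ξ)) hf ?_
    (hunit.mono fun ε hε => (hint ε hε).aestronglyMeasurable)
    (hunit.mono fun ε hε => abs_comp_sub_mul_le hL hR hm (Ioc_subset_Icc_self hε)) hlim
  simpa only [one_mul] using hint 1 ⟨one_pos, le_rfl⟩

/-- Lemma A.1 of the paper: under a pointwise vanishing condition and a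
monotone-domination condition on `H`, the convolution-type integrals
`∫ ξ^j K(ξ) y(θ−kξ) H(X−εξ) dξ` tend to `0` as `ε → 0⁺`. -/
theorem remainder_convolution_tendsto_zero
    (j : ℕ) (K : ℝ → ℝ) (hKm : Measurable K)
    (hKj : Integrable (fun ξ => ξ ^ j * K ξ))
    (y : ℝ → ℝ) (hy : Continuous y) (hyp : Function.Periodic y (2 * π))
    (k θ X : ℝ) (H : ℝ → ℝ) (hHm : Measurable H)
    (hint : ∀ ε ∈ Set.Ioc (0:ℝ) 1,
      Integrable (fun ξ => ξ ^ j * K ξ * y (θ - k * ξ) * H (X - ε * ξ)))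
    (hlim : ∀ ξ : ℝ, Tendsto (fun ε => H (X - ε * ξ)) (nhdsWithin 0 (Set.Ioi 0)) (nhds 0))
    (hmono : ∃ ξ₀ > (0:ℝ),
      MonotoneOn (fun s => |H (X - s)|) (Set.Ici ξ₀) ∧
      MonotoneOn (fun s => |H (X + s)|) (Set.Ici ξ₀) ∧
      ∃ m, ∀ s ∈ Set.Icc (X - ξ₀) (X + ξ₀), |H s| ≤ m) :
    Tendsto (fun ε => ∫ ξ : ℝ, ξ ^ j * K ξ * y (θ - k * ξ) * H (X - ε * ξ))
      (nhdsWithin 0 (Set.Ioi 0)) (nhds 0) :=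
  remainder_convolution_tendsto_zero_general j K hKj y hy hyp k θ X H hint hlim hmono
end
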